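/- arXiv:0911.4727 — 2 statements merged into one kernel-verified Lean document; each statement's English description precedes it below -/
import Mathlib

section
/- The collection of coherent and exchangeable sets of gambles on X^N is nonempty, and it has a smallest element (with respect to inclusion), namely D_{X^N} := W_{A_N} + {f ∈ G(X^N) : f > 0}. -/
/-! Since `ex^N` is a linear operator that is strictly positive on positive gambles, its kernel
`W_{A_N}` is a linear space containing no positive gamble. For any such linear space `W`, the set
`W + {f > 0}` avoids `0` and is closed under positive scaling and addition, so it is coherent and
absorbs `W`; and every coherent `D` with `W + D ⊆ D` contains it, because `D` contains every
`f > 0`. -/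

variable {X : Type*} [Fintype X] [DecidableEq X] [Nonempty X]

/-- `ex^N(f)`: the uniform average of all permuted versions `π^t f` of `f`,
where `(π^t f)(x) = f(x ∘ π)`. -/
noncomputable def exg {X : Type*} (N : ℕ) (f : (Fin N → X) → ℝ) : (Fin N → X) → ℝ :=
  fun x => (∑ π : Equiv.Perm (Fin N), f (x ∘ π)) / (N.factorial : ℝ)

/-- `W_{A_N}`: the linear span of the gambles `f - π^t f`, which is the kernel of
the projection operator `ex^N`. -/
def WA (X : Type*) (N : ℕ) : Set ((Fin N → X) → ℝ) := {f | exg N f = 0}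

/-- A coherent set of desirable gambles on a set of possibilities `Y`. -/
def Coherent {Y : Type*} (D : Set (Y → ℝ)) : Prop :=
  (0 : Y → ℝ) ∉ D ∧ (∀ f : Y → ℝ, 0 ≤ f → f ≠ 0 → f ∈ D) ∧
  (∀ f ∈ D, ∀ c : ℝ, 0 < c → c • f ∈ D) ∧ ∀ f ∈ D, ∀ g ∈ D, f + g ∈ D

/-- A set of desirable gambles on `X^N` is exchangeable if `W_{A_N} + D ⊆ D`. -/
def Exchangeable (X : Type*) (N : ℕ) (D : Set ((Fin N → X) → ℝ)) : Prop :=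
  ∀ f ∈ WA X N, ∀ g ∈ D, f + g ∈ D

open Pointwise

lemma setOf_nonneg_and_ne_zero_eq_Ioi {α : Type*} [PartialOrder α] [Zero α] :
    {a : α | 0 ≤ a ∧ a ≠ 0} = Set.Ioi 0 := by
  ext a
  simp [lt_iff_le_and_ne, ne_comm]

section SubmoduleAddPos

variable {Y : Type*} {W : Submodule ℝ (Y → ℝ)}

lemma add_mem_submodule_add_Ioi {f g : Y → ℝ} (hf : f ∈ W)
    (hg : g ∈ (W : Set (Y → ℝ)) + Set.Ioi 0) : f + g ∈ (W : Set (Y → ℝ)) + Set.Ioi 0 := by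
  obtain ⟨w, hw, p, hp, rfl⟩ := hg
  exact ⟨f + w, W.add_mem hf hw, p, hp, add_assoc f w p⟩

lemma coherent_submodule_add_Ioi (hW : ∀ f ∈ W, ¬0 < f) :
    Coherent ((W : Set (Y → ℝ)) + Set.Ioi 0) := by
  refine ⟨?_, ?_, ?_, ?_⟩
  · rintro ⟨w, hw, p, hp, hwp⟩
    exact hW (-w) (W.neg_mem hw) (by rwa [neg_eq_of_add_eq_zero_right hwp])
  · intro f hf hf0
    exact ⟨0, W.zero_mem, f, lt_of_le_of_ne hf hf0.symm, zero_add f⟩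
  · rintro _ ⟨w, hw, p, hp, rfl⟩ c hc
    exact ⟨c • w, W.smul_mem c hw, c • p, Set.mem_Ioi.mpr (smul_pos hc hp),
      (smul_add c w p).symm⟩
  · rintro _ ⟨w₁, hw₁, p₁, hp₁, rfl⟩ _ ⟨w₂, hw₂, p₂, hp₂, rfl⟩
    exact ⟨w₁ + w₂, W.add_mem hw₁ hw₂, p₁ + p₂, Set.mem_Ioi.mpr (add_pos hp₁ hp₂),
      add_add_add_comm _ _ _ _⟩

lemma submodule_add_Ioi_subset {D : Set (Y → ℝ)} (hD : Coherent D)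
    (hWD : ∀ f ∈ W, ∀ g ∈ D, f + g ∈ D) : (W : Set (Y → ℝ)) + Set.Ioi 0 ⊆ D := by
  rintro _ ⟨w, hw, p, hp, rfl⟩
  exact hWD w hw p (hD.2.1 p hp.le hp.ne')

lemma isLeast_submodule_add_Ioi (hW : ∀ f ∈ W, ¬0 < f) :
    IsLeast {D : Set (Y → ℝ) | Coherent D ∧ ∀ f ∈ W, ∀ g ∈ D, f + g ∈ D}
      ((W : Set (Y → ℝ)) + Set.Ioi 0) :=
  ⟨⟨coherent_submodule_add_Ioi hW, fun _ hf _ hg => add_mem_submodule_add_Ioi hf hg⟩,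
    fun _ hD => submodule_add_Ioi_subset hD.1 hD.2⟩

end SubmoduleAddPos

section Symmetrization

variable {α : Type*} {N : ℕ}

variable (α N) in
noncomputable def exgLinearMap : ((Fin N → α) → ℝ) →ₗ[ℝ] ((Fin N → α) → ℝ) where
  toFun := exg N
  map_add' f g := by
    funext x
    simp [exg, Finset.sum_add_distrib, add_div]
  map_smul' c f := by
    funext x
    simp only [exg, Pi.smul_apply, smul_eq_mul, RingHom.id_apply, ← Finset.mul_sum,
      mul_div_assoc]

lemma exg_pos {f : (Fin N → α) → ℝ} (hf : 0 < f) : 0 < exg N f := by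
  obtain ⟨hf_nonneg, x, hfx⟩ := Pi.lt_def.mp hf
  refine Pi.lt_def.mpr ⟨fun _ => div_nonneg (Finset.sum_nonneg fun π _ => hf_nonneg _)
    (Nat.cast_nonneg _), x, div_pos ?_ (Nat.cast_pos.mpr N.factorial_pos)⟩
  calc (0 : ℝ) < f (x ∘ (1 : Equiv.Perm (Fin N))) := hfx
    _ ≤ ∑ π : Equiv.Perm (Fin N), f (x ∘ π) :=
      Finset.single_le_sum (f := fun π : Equiv.Perm (Fin N) => f (x ∘ π))
        (fun π _ => hf_nonneg (x ∘ π)) (Finset.mem_univ _)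

lemma not_pos_of_mem_WA {f : (Fin N → α) → ℝ} (hf : f ∈ WA α N) : ¬0 < f := fun hpos =>
  (exg_pos hpos).ne' hf

end Symmetrization

theorem smallest_coherent_exchangeable_general {N : ℕ} :
    {D : Set ((Fin N → X) → ℝ) | Coherent D ∧ Exchangeable X N D}.Nonempty ∧
    IsLeast {D : Set ((Fin N → X) → ℝ) | Coherent D ∧ Exchangeable X N D}
      (WA X N + {f : (Fin N → X) → ℝ | 0 ≤ f ∧ f ≠ 0}) := by
  have h := isLeast_submodule_add_Ioi (W := LinearMap.ker (exgLinearMap X N))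
    fun _ => not_pos_of_mem_WA
  rw [setOf_nonneg_and_ne_zero_eq_Ioi]
  exact ⟨⟨_, h.1⟩, h⟩

theorem smallest_coherent_exchangeable {N : ℕ} (hN : 1 ≤ N) :
    {D : Set ((Fin N → X) → ℝ) | Coherent D ∧ Exchangeable X N D}.Nonempty ∧
    IsLeast {D : Set ((Fin N → X) → ℝ) | Coherent D ∧ Exchangeable X N D}
      (WA X N + {f : (Fin N → X) → ℝ | 0 ≤ f ∧ f ≠ 0}) :=
  smallest_coherent_exchangeable_general
end

section
/- A set of gambles D ⊆ G(X^N) is coherent and exchangeable if and only if there exists a coherent set D_c ⊆ G(N^N_X) of gambles on count vectors such that D = (Hy^N)^{-1}(D_c) = {f ∈ G(X^N) : Hy^N(f) ∈ D_c}; and in that case D_c is uniquely determined, with D_c = Hy^N(D) = {g ∈ G(N^N_X) : g ∘ T^N ∈ D}. -/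
variable {X : Type*} [Fintype X] [DecidableEq X] [Nonempty X]

/-- The counting map: `countVec x z` is the number of indices `k` with `x k = z`. -/
def countVec {X : Type*} [Fintype X] [DecidableEq X] {n : ℕ} (x : Fin n → X) : X → ℕ :=
  fun z => (Finset.univ.filter fun k => x k = z).card

lemma sum_countVec {X : Type*} [Fintype X] [DecidableEq X] {n : ℕ} (x : Fin n → X) :
    ∑ z, countVec x z = n := by
  classical
  have h := Finset.card_eq_sum_card_fiberwise
    (s := (Finset.univ : Finset (Fin n))) (t := (Finset.univ : Finset X))
    (f := x) (fun a _ => Finset.mem_univ _)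
  simpa [countVec, Finset.card_fin] using h.symm

/-- `N^N_X`: the set of count vectors, i.e. maps `m : X → ℕ` with `∑ m = N`. -/
abbrev CV (X : Type*) [Fintype X] (N : ℕ) := {m : X → ℕ // ∑ z, m z = N}

/-- The counting map `T^N : X^N → N^N_X`. -/
def Tmap {X : Type*} [Fintype X] [DecidableEq X] {N : ℕ} (x : Fin N → X) : CV X N :=
  ⟨countVec x, sum_countVec x⟩

/-- `Hy^N(f)`: the count gamble `m ↦ (1/|[m]|) ∑_{y ∈ [m]} f(y)`, where
`[m]` is the set of sequences with count vector `m`. -/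
noncomputable def hy {X : Type*} [Fintype X] [DecidableEq X] {N : ℕ}
    (f : (Fin N → X) → ℝ) : CV X N → ℝ :=
  fun m => (∑ y ∈ Finset.univ.filter (fun x : Fin N → X => Tmap x = m), f y) /
    ((Finset.univ.filter (fun x : Fin N → X => Tmap x = m)).card : ℝ)

/-!
Two sequences have the same count vector exactly when one is a permutation of the other, so the
permutation average `ex^N f` is `Hy^N f ∘ T^N`. Hence `W_{A_N}` is the kernel of the linear map
`Hy^N`, an exchangeable set is the full preimage of its image under `Hy^N`, and coherence passes
along `Hy^N` in both directions: `Hy^N` maps positive gambles to positive ones, and every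
positive count gamble `g` is the image of the positive gamble `g ∘ T^N`.
-/

open Finset

section Coherent

variable {Y Z : Type*}

lemma Coherent.preimage {Dc : Set (Z → ℝ)} (hDc : Coherent Dc) (L : (Y → ℝ) →ₗ[ℝ] (Z → ℝ))
    (hL : ∀ f, 0 < f → 0 < L f) : Coherent (L ⁻¹' Dc) := by
  obtain ⟨hzero, hpos, hsmul, hadd⟩ := hDc
  refine ⟨by simpa using hzero, fun f hf hf0 => ?_, fun f hf c hc => ?_, fun f hf g hg => ?_⟩
  · have hLf := hL f (lt_of_le_of_ne hf (Ne.symm hf0))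
    exact hpos _ hLf.le hLf.ne'
  · simpa only [Set.mem_preimage, map_smul] using hsmul _ hf c hc
  · simpa only [Set.mem_preimage, map_add] using hadd _ hf _ hg

lemma Coherent.image {D : Set (Y → ℝ)} (hD : Coherent D) (L : (Y → ℝ) →ₗ[ℝ] (Z → ℝ))
    (hsat : L ⁻¹' (L '' D) = D) (hL : ∀ g, 0 < g → ∃ f, 0 < f ∧ L f = g) :
    Coherent (L '' D) := by
  obtain ⟨hzero, hpos, hsmul, hadd⟩ := hD
  refine ⟨fun h0 => hzero ?_, fun g hg hg0 => ?_, ?_, ?_⟩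
  · rw [← hsat]
    simpa using h0
  · obtain ⟨f, hf, rfl⟩ := hL g (lt_of_le_of_ne hg (Ne.symm hg0))
    exact ⟨f, hpos f hf.le hf.ne', rfl⟩
  · rintro _ ⟨f, hf, rfl⟩ c hc
    exact ⟨c • f, hsmul f hf c hc, map_smul L c f⟩
  · rintro _ ⟨f, hf, rfl⟩ _ ⟨g, hg, rfl⟩
    exact ⟨f + g, hadd f hf g hg, map_add L f g⟩

end Coherent

lemma LinearMap.preimage_image_eq_of_add_ker {R V W : Type*} [Ring R] [AddCommGroup V]
    [Module R V] [AddCommGroup W] [Module R W] (L : V →ₗ[R] W) {D : Set V}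
    (hD : ∀ f ∈ LinearMap.ker L, ∀ g ∈ D, f + g ∈ D) : L ⁻¹' (L '' D) = D := by
  refine Set.Subset.antisymm (fun f ⟨g, hg, hgf⟩ => ?_) (Set.subset_preimage_image L D)
  simpa using hD (f - g) (by simp [LinearMap.mem_ker, hgf]) g hg

lemma Function.Surjective.pos_comp {α β : Type*} {T : α → β} (hT : Function.Surjective T)
    {g : β → ℝ} (hg : 0 < g) : 0 < g ∘ T := by
  obtain ⟨hg, b, hb⟩ := Pi.lt_def.1 hg
  obtain ⟨a, rfl⟩ := hT b
  exact Pi.lt_def.2 ⟨fun a => hg (T a), a, hb⟩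

lemma exg_comp_perm {X : Type*} {N : ℕ} (f : (Fin N → X) → ℝ) (x : Fin N → X)
    (σ : Equiv.Perm (Fin N)) :
    exg N f (x ∘ σ) = exg N f x :=
  congr_arg (· / (N.factorial : ℝ)) (Equiv.sum_comp (Equiv.mulLeft σ) fun π => f (x ∘ π))

section Counting

variable {X : Type*} [Fintype X] [DecidableEq X] {N : ℕ}

lemma countVec_eq_card_subtype (x : Fin N → X) (z : X) :
    countVec x z = Fintype.card {k // x k = z} :=
  (Fintype.card_subtype _).symm

lemma Tmap_surjective : Function.Surjective (Tmap : (Fin N → X) → CV X N) := by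
  rintro ⟨m, hm⟩
  let e : (Σ z, Fin (m z)) ≃ Fin N := Fintype.equivFinOfCardEq (by simp [hm])
  refine ⟨fun k => (e.symm k).1, Subtype.ext (funext fun z => ?_)⟩
  calc countVec (fun k => (e.symm k).1) z
      = Fintype.card {s : Σ z, Fin (m z) // s.1 = z} := by
        rw [countVec_eq_card_subtype]
        exact Fintype.card_congr (e.symm.subtypeEquiv fun _ => Iff.rfl)
    _ = m z := by rw [Fintype.card_congr (Equiv.sigmaSubtype z), Fintype.card_fin]

lemma Tmap_comp_perm (x : Fin N → X) (σ : Equiv.Perm (Fin N)) : Tmap (x ∘ σ) = Tmap x :=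
  Subtype.ext <| funext fun z => by
    simp only [Tmap, countVec_eq_card_subtype]
    exact Fintype.card_congr (σ.subtypeEquiv fun _ => Iff.rfl)

lemma exists_perm_comp_eq_of_Tmap_eq {x y : Fin N → X} (h : Tmap x = Tmap y) :
    ∃ σ : Equiv.Perm (Fin N), x ∘ σ = y := by
  have hfiber (z : X) : Fintype.card {k // y k = z} = Fintype.card {k // x k = z} := by
    simpa only [Tmap, countVec_eq_card_subtype] using congr_fun (congr_arg Subtype.val h.symm) z
  exact ⟨Equiv.ofFiberEquiv fun z => Fintype.equivOfCardEq (hfiber z),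
    funext <| Equiv.ofFiberEquiv_map _⟩

end Counting

section Hypergeometric

variable {X : Type*} [Fintype X] [DecidableEq X] {N : ℕ}

/-- The atom `[m]`. -/
def atom (m : CV X N) : Finset (Fin N → X) :=
  Finset.univ.filter (fun x : Fin N → X => Tmap x = m)

@[simp]
lemma mem_atom {m : CV X N} {x : Fin N → X} : x ∈ atom m ↔ Tmap x = m := by
  simp [atom]

lemma atom_nonempty (m : CV X N) : (atom m).Nonempty :=
  let ⟨x, hx⟩ := Tmap_surjective m
  ⟨x, mem_atom.2 hx⟩

lemma hy_apply (f : (Fin N → X) → ℝ) (m : CV X N) :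
    hy f m = (∑ y ∈ atom m, f y) / #(atom m) :=
  rfl

lemma hy_apply_eq_of_forall_mem_atom {f : (Fin N → X) → ℝ} {m : CV X N} {c : ℝ}
    (hf : ∀ y ∈ atom m, f y = c) : hy f m = c := by
  have hcard : (#(atom m) : ℝ) ≠ 0 := by exact_mod_cast (atom_nonempty m).card_pos.ne'
  rw [hy_apply, Finset.sum_congr rfl hf, Finset.sum_const, nsmul_eq_mul,
    mul_div_cancel_left₀ _ hcard]

lemma hy_comp_Tmap (g : CV X N → ℝ) : hy (g ∘ Tmap) = g :=
  funext fun _ => hy_apply_eq_of_forall_mem_atom fun _ hy => congr_arg g (mem_atom.1 hy)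

lemma hy_surjective : Function.Surjective (hy : ((Fin N → X) → ℝ) → CV X N → ℝ) :=
  fun g => ⟨g ∘ Tmap, hy_comp_Tmap g⟩

lemma hy_pos {f : (Fin N → X) → ℝ} (hf : 0 < f) : 0 < hy f := by
  obtain ⟨hf, x, hx⟩ := Pi.lt_def.1 hf
  have hmem : x ∈ atom (Tmap x) := mem_atom.2 rfl
  refine Pi.lt_def.2 ⟨fun _ => ?_, Tmap x, ?_⟩
  · exact div_nonneg (Finset.sum_nonneg fun y _ => hf y) (Nat.cast_nonneg _)
  · exact div_pos (hx.trans_le (Finset.single_le_sum (fun y _ => hf y) hmem))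
      (by exact_mod_cast Finset.card_pos.2 ⟨x, hmem⟩)

noncomputable def hyLinear : ((Fin N → X) → ℝ) →ₗ[ℝ] (CV X N → ℝ) where
  toFun := hy
  map_add' f g := funext fun m => by
    simp only [hy_apply, Pi.add_apply, Finset.sum_add_distrib, add_div]
  map_smul' c f := funext fun m => by
    simp only [hy_apply, Pi.smul_apply, smul_eq_mul, ← Finset.mul_sum, mul_div_assoc,
      RingHom.id_apply]

@[simp]
lemma coe_hyLinear : ⇑(hyLinear : ((Fin N → X) → ℝ) →ₗ[ℝ] (CV X N → ℝ)) = hy :=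
  rfl

lemma sum_atom_comp_perm (f : (Fin N → X) → ℝ) (m : CV X N) (σ : Equiv.Perm (Fin N)) :
    ∑ y ∈ atom m, f (y ∘ σ) = ∑ y ∈ atom m, f y :=
  Finset.sum_nbij' (· ∘ σ) (· ∘ ⇑σ⁻¹) (by simp [Tmap_comp_perm]) (by simp [Tmap_comp_perm])
    (fun y _ => by ext; simp) (fun y _ => by ext; simp) fun _ _ => rfl

lemma hy_exg (f : (Fin N → X) → ℝ) : hy (exg N f) = hy f := by
  funext m
  have hfact : (N.factorial : ℝ) ≠ 0 := by positivity
  have hsum : ∑ y ∈ atom m, exg N f y = ∑ y ∈ atom m, f y := by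
    simp only [exg, ← Finset.sum_div]
    rw [Finset.sum_comm]
    simp only [sum_atom_comp_perm, Finset.sum_const, Finset.card_univ, Fintype.card_perm,
      Fintype.card_fin, nsmul_eq_mul]
    field_simp
  rw [hy_apply, hy_apply, hsum]

lemma hy_comp_Tmap_eq_of_perm_invariant {g : (Fin N → X) → ℝ}
    (hg : ∀ x (σ : Equiv.Perm (Fin N)), g (x ∘ σ) = g x) : hy g ∘ Tmap = g :=
  funext fun x => hy_apply_eq_of_forall_mem_atom fun y hy => by
    obtain ⟨σ, rfl⟩ := exists_perm_comp_eq_of_Tmap_eq (mem_atom.1 hy).symm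
    exact hg x σ

lemma exg_eq_hy_comp_Tmap (f : (Fin N → X) → ℝ) : exg N f = hy f ∘ Tmap := by
  rw [← hy_exg f, hy_comp_Tmap_eq_of_perm_invariant (exg_comp_perm f)]

lemma mem_WA_iff {f : (Fin N → X) → ℝ} : f ∈ WA X N ↔ hy f = 0 := by
  change exg N f = 0 ↔ _
  rw [exg_eq_hy_comp_Tmap]
  exact Tmap_surjective.right_cancellable (g₂ := (0 : CV X N → ℝ))

end Hypergeometric

theorem finite_representation_general {N : ℕ} (D : Set ((Fin N → X) → ℝ)) :
    ((Coherent D ∧ Exchangeable X N D) ↔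
      ∃ Dc : Set (CV X N → ℝ), Coherent Dc ∧ D = {f | hy f ∈ Dc}) ∧
    ∀ Dc : Set (CV X N → ℝ), Coherent Dc → D = {f | hy f ∈ Dc} →
      Dc = hy '' D ∧ Dc = {g : CV X N → ℝ | g ∘ Tmap ∈ D} := by
  refine ⟨⟨fun ⟨hD, hexch⟩ => ?_, ?_⟩, fun Dc _ hDc => ?_⟩
  · have hsat : hyLinear ⁻¹' (hyLinear '' D) = D :=
      hyLinear.preimage_image_eq_of_add_ker fun f hf =>
        hexch f (mem_WA_iff.2 (LinearMap.mem_ker.1 hf))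
    exact ⟨hy '' D, hD.image hyLinear hsat fun g hg =>
      ⟨g ∘ Tmap, Tmap_surjective.pos_comp hg, hy_comp_Tmap g⟩, hsat.symm⟩
  · rintro ⟨Dc, hDc, rfl⟩
    exact ⟨hDc.preimage hyLinear fun _ => hy_pos,
      fun f hf g hg => show hy (f + g) ∈ Dc by
        rwa [← coe_hyLinear, map_add, coe_hyLinear, mem_WA_iff.1 hf, zero_add]⟩
  · subst hDc
    exact ⟨(Set.image_preimage_eq Dc hy_surjective).symm, by ext g; simp [hy_comp_Tmap]⟩

theorem finite_representation {N : ℕ} (hN : 1 ≤ N) (D : Set ((Fin N → X) → ℝ)) :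
    ((Coherent D ∧ Exchangeable X N D) ↔
      ∃ Dc : Set (CV X N → ℝ), Coherent Dc ∧ D = {f | hy f ∈ Dc}) ∧
    ∀ Dc : Set (CV X N → ℝ), Coherent Dc → D = {f | hy f ∈ Dc} →
      Dc = hy '' D ∧ Dc = {g : CV X N → ℝ | g ∘ Tmap ∈ D} :=
  finite_representation_general D
end
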